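/- For the polynomials p(x) = 40x⁴ - 30x² + 2 and q(x) = 75x⁹ - 150x⁷ + 88x⁵ - 10x³ - 3x, there do not exist polynomials w, p₁, q₁ ∈ ℝ[x] with w(-1) = w(1) such that p̃ = p₁ ∘ w and q̃ = q₁ ∘ w, where p̃(x) = ∫_{-1}^x p and q̃(x) = ∫_{-1}^x q. -/

import Mathlib

open MeasureTheory

noncomputable def p (x : ℝ) : ℝ := 40*x^4 - 30*x^2 + 2
noncomputable def q (x : ℝ) : ℝ := 75*x^9 - 150*x^7 + 88*x^5 - 10*x^3 - 3*x

/-!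
The primitive p̃ = 8x⁵ - 10x³ + 2x has prime degree 5, so in p̃ = p₁ ∘ w either w or p₁ is
affine. An affine w is injective, contradicting w(-1) = w(1). An affine p₁ is injective, so w
takes equal values wherever p̃ does, in particular w(0) = w(1) because p̃(0) = p̃(1) = 0; then
q̃(0) = q̃(1), but q̃(0) = 7/12 while q̃(1) = ∫₋₁¹ q = 0 since q is odd.
-/

open Polynomial

namespace Polynomial

theorem eval_injective_of_natDegree_eq_one {R : Type*} [CommRing R] [IsDomain R] {f : R[X]}
    (hf : f.natDegree = 1) : Function.Injective f.eval := by
  obtain ⟨a, ha, b, rfl⟩ := natDegree_eq_one.mp hf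
  intro x y hxy
  simpa [ha] using hxy

theorem eval_eq_of_eval_comp_eq_of_natDegree_prime {R : Type*} [CommRing R] [IsDomain R]
    {f w : R[X]} (hprime : (f.comp w).natDegree.Prime) {a b : R} (hab : a ≠ b)
    (hw : w.eval a = w.eval b) {x y : R} (hxy : (f.comp w).eval x = (f.comp w).eval y) :
    w.eval x = w.eval y := by
  rw [natDegree_comp, Nat.prime_mul_iff] at hprime
  rcases hprime with ⟨-, hw_one⟩ | ⟨-, hf_one⟩
  · exact absurd (eval_injective_of_natDegree_eq_one hw_one hw) hab
  · rw [eval_comp, eval_comp] at hxy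
    exact eval_injective_of_natDegree_eq_one hf_one hxy

theorem integral_eval_derivative (P : ℝ[X]) (a b : ℝ) :
    ∫ x in a..b, P.derivative.eval x = P.eval b - P.eval a :=
  intervalIntegral.integral_eq_sub_of_hasDerivAt (fun x _ => P.hasDerivAt x)
    (P.derivative.continuous.intervalIntegrable a b)

end Polynomial

noncomputable def pTilde : ℝ[X] := C 8 * X ^ 5 - C 10 * X ^ 3 + C 2 * X

noncomputable def qTilde : ℝ[X] :=
  C (15/2) * X ^ 10 - C (75/4) * X ^ 8 + C (44/3) * X ^ 6 - C (5/2) * X ^ 4 - C (3/2) * X ^ 2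

theorem natDegree_pTilde : pTilde.natDegree = 5 := by
  unfold pTilde
  compute_degree!

theorem integral_p (x : ℝ) : ∫ σ in (-1:ℝ)..x, p σ = pTilde.eval x := by
  have hp : p = fun σ => pTilde.derivative.eval σ := by
    funext σ
    simp only [p, pTilde, derivative_add, derivative_sub, derivative_C_mul_X_pow,
      derivative_C_mul_X, eval_add, eval_sub, eval_mul, eval_C, eval_pow, eval_X]
    norm_num
  rw [hp, integral_eval_derivative]
  norm_num [pTilde]

theorem integral_q (x : ℝ) : ∫ σ in (-1:ℝ)..x, q σ = qTilde.eval x - qTilde.eval (-1) := by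
  have hq : q = fun σ => qTilde.derivative.eval σ := by
    funext σ
    simp only [q, qTilde, derivative_add, derivative_sub, derivative_C_mul_X_pow, eval_add,
      eval_sub, eval_mul, eval_C, eval_pow, eval_X]
    norm_num
  rw [hq, integral_eval_derivative]

theorem no_composition_condition :
    ¬ ∃ (w p₁ q₁ : Polynomial ℝ),
      w.eval (-1) = w.eval 1 ∧
      (∀ x : ℝ, (∫ σ in (-1:ℝ)..x, p σ) = p₁.eval (w.eval x)) ∧
      (∀ x : ℝ, (∫ σ in (-1:ℝ)..x, q σ) = q₁.eval (w.eval x)) := by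
  rintro ⟨w, p₁, q₁, hw, hp, hq⟩
  have hcomp : p₁.comp w = pTilde :=
    Polynomial.funext fun x => by rw [eval_comp, ← hp, integral_p]
  have hprime : (p₁.comp w).natDegree.Prime := by
    rw [hcomp, natDegree_pTilde]
    norm_num
  have hw01 : w.eval 0 = w.eval 1 :=
    eval_eq_of_eval_comp_eq_of_natDegree_prime hprime (by norm_num) hw
      (by norm_num [hcomp, pTilde])
  have hq01 : (∫ σ in (-1:ℝ)..0, q σ) = ∫ σ in (-1:ℝ)..1, q σ := by
    rw [hq, hq, hw01]
  norm_num [integral_q, qTilde] at hq01
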